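/- For any quasiYamanouchi genomic tableau U of shape λ, the generating function of the regularization fiber over U equals the fundamental quasisymmetric function indexed by wt(U): Σ_{V ∈ Gen(λ), reg(V) = U} x^{wt(V)} = F_{wt(U)}. -/

import Mathlib

open scoped Classical

/-- The cell `x = (row, column)` (0-indexed, English orientation) lies in the Young diagram
whose `r`-th row has length `lam r`. -/
def InShape (lam : ℕ → ℕ) (x : ℕ × ℕ) : Prop := x.2 < lam x.1

/-- `lam : ℕ → ℕ` is the row-length function of a partition: weakly decreasing and
eventually zero. -/
def IsPartitionFn (lam : ℕ → ℕ) : Prop := Antitone lam ∧ ∃ N, ∀ n, N ≤ n → lam n = 0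

/-- A genomic tableau of shape `lam`: a semistandard filling (positive entries, rows weakly
increasing left-to-right, columns strictly increasing top-to-bottom) together with, for each
`i`, a partition of the boxes labeled `i` into genes, encoded by the relation `sameGene`.
Boxes in a common gene share their entry; if a gene has boxes (necessarily with a common
entry) in columns `c₁ < c₃`, then every box with the same entry in an intervening column
belongs to the same gene; and no gene has two boxes in a common row.  Entries and the
relation are normalized (to `0`, resp. `False`) outside the shape so that equality of
structures agrees with equality of tableaux. -/
structure GenomicTableau (lam : ℕ → ℕ) where
  entry : ℕ × ℕ → ℕ
  sameGene : ℕ × ℕ → ℕ × ℕ → Prop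
  entry_pos : ∀ x, InShape lam x → 0 < entry x
  entry_zero : ∀ x, ¬ InShape lam x → entry x = 0
  row_weak : ∀ r c₁ c₂, c₁ ≤ c₂ → InShape lam (r, c₂) → entry (r, c₁) ≤ entry (r, c₂)
  col_strict : ∀ r₁ r₂ c, r₁ < r₂ → InShape lam (r₂, c) → entry (r₁, c) < entry (r₂, c)
  sameGene_mem : ∀ x y, sameGene x y → InShape lam x ∧ InShape lam y
  sameGene_refl : ∀ x, InShape lam x → sameGene x x
  sameGene_symm : ∀ x y, sameGene x y → sameGene y x
  sameGene_trans : ∀ x y z, sameGene x y → sameGene y z → sameGene x z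
  sameGene_entry : ∀ x y, sameGene x y → entry x = entry y
  sameGene_interval : ∀ x y z, sameGene x z → InShape lam y → entry y = entry x →
    x.2 < y.2 → y.2 < z.2 → sameGene x y
  sameGene_row : ∀ x y, sameGene x y → x.1 = y.1 → x = y

/-- `x` is the leftmost box of its gene in the genomic tableau `T`. -/
def IsGeneLeader {lam : ℕ → ℕ} (T : GenomicTableau lam) (x : ℕ × ℕ) : Prop :=
  InShape lam x ∧ ∀ y, T.sameGene x y → x.2 ≤ y.2

/-- The number of `(n+1)`-genes of `T` (counted via their leftmost boxes).  Thus `wt T` is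
the weight of `T` as a weak composition indexed from `0`: the variable `x_n` records
`(n+1)`-genes. -/
noncomputable def wt {lam : ℕ → ℕ} (T : GenomicTableau lam) (n : ℕ) : ℕ :=
  {x | IsGeneLeader T x ∧ T.entry x = n + 1}.ncard

/-- The largest entry of the genomic tableau `T`. -/
noncomputable def maxEntry {lam : ℕ → ℕ} (T : GenomicTableau lam) : ℕ :=
  sSup {n | ∃ x, InShape lam x ∧ T.entry x = n}

/-- The positive part of the weight of `T`: the list of nonzero components of `wt T`,
in order. -/
noncomputable def wtPos {lam : ℕ → ℕ} (T : GenomicTableau lam) : List ℕ :=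
  ((List.range (maxEntry T)).map (wt T)).filter (fun e => decide (0 < e))

/-- The (strong) composition `β` refines `α` if `α` is obtained from `β` by summing
consecutive blocks. -/
def Refines (β α : List ℕ) : Prop :=
  ∃ L : List (List ℕ), L.flatten = β ∧ L.map List.sum = α

/-- The positive part of a weak composition `m`: the list of its nonzero values in order of
the index. -/
noncomputable def posPart (m : ℕ →₀ ℕ) : List ℕ :=
  (m.support.sort (· ≤ ·)).map (fun i => m i)

/-- The fundamental quasisymmetric function `F_α`, a power series in variables indexed
by `ℕ`: the sum of `x^m` over all weak compositions `m` whose positive part refines `α`. -/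
noncomputable def fundamentalF (α : List ℕ) : MvPowerSeries ℕ ℤ :=
  fun m : ℕ →₀ ℕ => if Refines (posPart m) α then 1 else 0

/-- The genomic Schur function `U_lam`: the coefficient of `x^m` is the number of genomic
tableaux of shape `lam` with weight `m`. -/
noncomputable def genomicSchur (lam : ℕ → ℕ) : MvPowerSeries ℕ ℤ :=
  fun m : ℕ →₀ ℕ => (Nat.card {T : GenomicTableau lam // ∀ n, wt T n = m n} : ℤ)

/-- A genomic tableau is quasiYamanouchi if for every `i > 1` appearing in it, some
instance of `i` is weakly west of some instance of `i-1`. -/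
def IsQY {lam : ℕ → ℕ} (T : GenomicTableau lam) : Prop :=
  ∀ i, 2 ≤ i → (∃ x, InShape lam x ∧ T.entry x = i) →
    ∃ x y, InShape lam x ∧ InShape lam y ∧
      T.entry x = i ∧ T.entry y = i - 1 ∧ x.2 ≤ y.2

/-- One step of the regularization algorithm: if `i ≥ 2` appears in `T` and every box
labeled `i` is strictly east of every box labeled `i-1`, replace every label `i` by `i-1`,
keeping the gene decomposition. -/
def RegStep {lam : ℕ → ℕ} (T T' : GenomicTableau lam) : Prop :=
  ∃ i, 2 ≤ i ∧ (∃ x, InShape lam x ∧ T.entry x = i) ∧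
    (∀ x y, InShape lam x → InShape lam y → T.entry x = i → T.entry y = i - 1 → y.2 < x.2) ∧
    (∀ x, T'.entry x = if T.entry x = i then i - 1 else T.entry x) ∧
    (∀ x y, T'.sameGene x y ↔ T.sameGene x y)

/-- An increasing tableau of shape `lam`: positive entries, strictly increasing along rows
and down columns, normalized to `0` outside the shape. -/
structure IncreasingTableau (lam : ℕ → ℕ) where
  entry : ℕ × ℕ → ℕ
  entry_pos : ∀ x, InShape lam x → 0 < entry x
  entry_zero : ∀ x, ¬ InShape lam x → entry x = 0
  row_strict : ∀ r c₁ c₂, c₁ < c₂ → InShape lam (r, c₂) → entry (r, c₁) < entry (r, c₂)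
  col_strict : ∀ r₁ r₂ c, r₁ < r₂ → InShape lam (r₂, c) → entry (r₁, c) < entry (r₂, c)

/-- The largest entry of the increasing tableau `T`. -/
noncomputable def maxEntryInc {lam : ℕ → ℕ} (T : IncreasingTableau lam) : ℕ :=
  sSup {n | ∃ x, InShape lam x ∧ T.entry x = n}

/-- An increasing tableau is gapless if its set of entries is `{1, …, n}` for some `n`. -/
def Gapless {lam : ℕ → ℕ} (T : IncreasingTableau lam) : Prop :=
  ∀ i, 0 < i → i ≤ maxEntryInc T → ∃ x, InShape lam x ∧ T.entry x = i

/-- `i` is a descent of the increasing tableau `T` if some instance of `i` lies in a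
strictly higher row than some instance of `i+1`. -/
def IsDescent {lam : ℕ → ℕ} (T : IncreasingTableau lam) (i : ℕ) : Prop :=
  ∃ x y, InShape lam x ∧ InShape lam y ∧ T.entry x = i ∧ T.entry y = i + 1 ∧ x.1 < y.1

/-- The descent composition of a gapless increasing tableau with entries `{1, …, n}`:
the lengths of the segments of the word `1 2 ⋯ n` cut after each descent. -/
noncomputable def descComp {lam : ℕ → ℕ} (T : IncreasingTableau lam) : List ℕ :=
  let n := maxEntryInc T
  let ds := (((Finset.range n).filter fun i => IsDescent T i).sort (· ≤ ·)) ++ [n]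
  (ds.zip (0 :: ds)).map fun p => p.1 - p.2

/-- A standard Young tableau, viewed as an increasing tableau: gapless with all entries
distinct (so the entries are `1, …, |lam|`, each exactly once). -/
def IsStandard {lam : ℕ → ℕ} (T : IncreasingTableau lam) : Prop :=
  Gapless T ∧ ∀ x y, InShape lam x → InShape lam y → T.entry x = T.entry y → x = y

/-- The column of the leftmost box of the gene of `x` in `T`. -/
noncomputable def leadCol {lam : ℕ → ℕ} (T : GenomicTableau lam) (x : ℕ × ℕ) : ℕ :=
  sInf {c | ∃ y, T.sameGene x y ∧ y.2 = c}

/-- K-standardization `Φ`: order the genes of `T` by listing the `1`-genes left to right,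
then the `2`-genes left to right, and so on; `kStd T x` is the (1-based) position of the
gene of `x` in this order (and `0` outside the shape). -/
noncomputable def kStd {lam : ℕ → ℕ} (T : GenomicTableau lam) (x : ℕ × ℕ) : ℕ :=
  if InShape lam x then
    {y | IsGeneLeader T y ∧ (T.entry y < T.entry x ∨
        (T.entry y = T.entry x ∧ y.2 ≤ leadCol T x))}.ncard
  else 0

/-- A semistandard tableau of shape `lam`, with positive entries, normalized to `0`
outside the shape. -/
structure SemistandardTableau (lam : ℕ → ℕ) where
  entry : ℕ × ℕ → ℕ
  entry_pos : ∀ x, InShape lam x → 0 < entry x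
  entry_zero : ∀ x, ¬ InShape lam x → entry x = 0
  row_weak : ∀ r c₁ c₂, c₁ ≤ c₂ → InShape lam (r, c₂) → entry (r, c₁) ≤ entry (r, c₂)
  col_strict : ∀ r₁ r₂ c, r₁ < r₂ → InShape lam (r₂, c) → entry (r₁, c) < entry (r₂, c)

/-- The number of boxes of `T` with entry `n+1` (matching the variable convention of
`wt`: the variable `x_n` records the entry `n+1`). -/
noncomputable def contentOf {lam : ℕ → ℕ} (T : SemistandardTableau lam) (n : ℕ) : ℕ :=
  {x | InShape lam x ∧ T.entry x = n + 1}.ncard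

/-- The Schur function `s_mu` as the generating function of semistandard tableaux of
shape `mu` by content. -/
noncomputable def schurFn (mu : ℕ → ℕ) : MvPowerSeries ℕ ℤ :=
  fun m : ℕ →₀ ℕ => (Nat.card {T : SemistandardTableau mu // ∀ n, contentOf T n = m n} : ℤ)

/-- The row-length function of the flag-shaped partition `(a, b, 1^k)`. -/
def flagShape (a b k : ℕ) : ℕ → ℕ :=
  fun r => if r = 0 then a else if r = 1 then b else if r < k + 2 then 1 else 0

/-- The homogeneous component of degree `d` of a power series. -/
noncomputable def homComponent (d : ℕ) (f : MvPowerSeries ℕ ℤ) : MvPowerSeries ℕ ℤ :=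
  fun m : ℕ →₀ ℕ => if (m.sum fun _ e => e) = d then MvPowerSeries.coeff m f else 0

/-- The complete homogeneous symmetric function `h_k` (`h_0 = 1`, and `h_k = 0` for
`k < 0`): the sum of all monomials of total degree `k`. -/
noncomputable def hSeries (k : ℤ) : MvPowerSeries ℕ ℤ :=
  fun m : ℕ →₀ ℕ => if ((m.sum fun _ e => e : ℕ) : ℤ) = k then 1 else 0

/-- The Schur function of an arbitrary (strong) composition `α`, via the Jacobi–Trudi
determinant `s_α = det(h_{α_i - i + j})`. -/
noncomputable def schurComp (α : List ℕ) : MvPowerSeries ℕ ℤ :=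
  Matrix.det (Matrix.of fun i j : Fin α.length =>
    hSeries ((α.get i : ℤ) - (i : ℕ) + (j : ℕ)))

/-- `e` lies in the `i`-th block (0-indexed) `M_{i+1}(α) = {α_1 + ⋯ + α_i + 1, …,
α_1 + ⋯ + α_{i+1}}` of the composition `α`. -/
def InBlock (α : List ℕ) (i : ℕ) (e : ℕ) : Prop :=
  (α.take i).sum < e ∧ e ≤ (α.take (i + 1)).sum

/-- The positive part of a weak composition of length `n`. -/
noncomputable def posPartFin {n : ℕ} (m : Fin n →₀ ℕ) : List ℕ :=
  (List.ofFn fun k : Fin n => m k).filter (fun e => decide (0 < e))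

/-- The fundamental quasisymmetric polynomial `F_α(x_1, …, x_n)` in `n` variables. -/
noncomputable def fundamentalFFin (n : ℕ) (α : List ℕ) : MvPowerSeries (Fin n) ℤ :=
  fun m : Fin n →₀ ℕ => if Refines (posPartFin m) α then 1 else 0

/-- The genomic Schur polynomial `U_lam(x_1, …, x_n)`: the generating function of genomic
tableaux with all entries at most `n`, by weight. -/
noncomputable def genomicSchurPoly (lam : ℕ → ℕ) (n : ℕ) : MvPowerSeries (Fin n) ℤ :=
  fun m : Fin n →₀ ℕ =>
    (Nat.card {T : GenomicTableau lam //
      (∀ x, InShape lam x → T.entry x ≤ n) ∧ ∀ k : Fin n, wt T (k : ℕ) = m k} : ℤ)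

/-- The generating function of the fiber of the regularization map over `U`: the
coefficient of `x^m` counts genomic tableaux `V` with `reg V = U` and weight `m`. -/
noncomputable def regFiberSeries {lam : ℕ → ℕ}
    (reg : GenomicTableau lam → GenomicTableau lam) (U : GenomicTableau lam) :
    MvPowerSeries ℕ ℤ :=
  fun m : ℕ →₀ ℕ =>
    (Nat.card {V : GenomicTableau lam // reg V = U ∧ ∀ n, wt V n = m n} : ℤ)

/-! Regularization only merges a label `i` into `i - 1` when every `i` lies strictly east of
every `i - 1`. Hence if `V` regularizes to `U`, then `V` coarsens to `U`: both have the same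
genes, the `U`-labels are a weakly increasing function of the `V`-labels, and `V`-labels merged
into a single `U`-label occur from west to east. A tableau has at most one quasiYamanouchi
coarsening, so `reg V = U` exactly when `V` coarsens to `U`.

Coarsening does not change the K-standardization `Φ`, and a tableau is recovered from `Φ` and
its weight `m`: the `k`-th gene gets the label `j` with
`m₁ + ⋯ + m_{j-1} < k ≤ m₁ + ⋯ + m_j`. So the fiber over `U` contains at most one tableau of
each weight `m`, and relabelling the genes of `U` by this rule produces one exactly when the
partial sums of `wt U` are among those of `m` and the totals agree, that is, when the positive
part of `m` refines `wt U`. -/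

def IsPrefixSum (l : List ℕ) (v : ℕ) : Prop := ∃ k, (l.take k).sum = v

theorem isPrefixSum_zero (l : List ℕ) : IsPrefixSum l 0 := ⟨0, rfl⟩

theorem isPrefixSum_cons_iff {a : ℕ} {l : List ℕ} {v : ℕ} :
    IsPrefixSum (a :: l) v ↔ v = 0 ∨ ∃ w, IsPrefixSum l w ∧ v = a + w := by
  constructor
  · rintro ⟨_ | k, rfl⟩
    · exact Or.inl rfl
    · exact Or.inr ⟨_, ⟨k, rfl⟩, by simp⟩
  · rintro (rfl | ⟨_, ⟨k, rfl⟩, rfl⟩)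
    · exact isPrefixSum_zero _
    · exact ⟨k + 1, by simp⟩

theorem isPrefixSum_filter_pos_iff (l : List ℕ) (v : ℕ) :
    IsPrefixSum (l.filter fun e => decide (0 < e)) v ↔ IsPrefixSum l v := by
  induction l generalizing v with
  | nil => rfl
  | cons a l ih =>
    rcases Nat.eq_zero_or_pos a with rfl | ha
    · simp only [List.filter_cons, lt_irrefl, decide_false, Bool.false_eq_true, if_false, ih,
        isPrefixSum_cons_iff, zero_add]
      constructor
      · exact fun h => Or.inr ⟨v, h, rfl⟩
      · rintro (rfl | ⟨w, hw, rfl⟩)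
        exacts [isPrefixSum_zero l, hw]
    · simp only [List.filter_cons, ha, decide_true, if_true, isPrefixSum_cons_iff, ih]

theorem sum_filter_pos (l : List ℕ) : (l.filter fun e => decide (0 < e)).sum = l.sum := by
  induction l with
  | nil => rfl
  | cons a l ih =>
    rcases Nat.eq_zero_or_pos a with rfl | ha
    · simp [ih]
    · simp [ha, ih]

theorem Refines.sum_eq {β α : List ℕ} (h : Refines β α) : β.sum = α.sum := by
  obtain ⟨L, rfl, rfl⟩ := h
  exact List.sum_flatten

theorem Refines.isPrefixSum {β α : List ℕ} (h : Refines β α) {v : ℕ}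
    (hv : IsPrefixSum α v) : IsPrefixSum β v := by
  obtain ⟨L, rfl, rfl⟩ := h
  obtain ⟨i, rfl⟩ := hv
  refine ⟨(L.take i).flatten.length, ?_⟩
  have hsplit : L.flatten = (L.take i).flatten ++ (L.drop i).flatten := by
    rw [← List.flatten_append, List.take_append_drop]
  rw [hsplit, List.take_left, List.sum_flatten, List.map_take]

theorem refines_of_isPrefixSum {β α : List ℕ} (hβ : ∀ b ∈ β, 0 < b)
    (hsum : β.sum = α.sum) (hps : ∀ v, IsPrefixSum α v → IsPrefixSum β v) : Refines β α := by
  induction α generalizing β with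
  | nil =>
    obtain rfl : β = [] := by
      rcases β with _ | ⟨b, β⟩
      · rfl
      · have := hβ b List.mem_cons_self
        simp only [List.sum_cons, List.sum_nil] at hsum
        omega
    exact ⟨[], rfl, rfl⟩
  | cons a α ih =>
    obtain ⟨k, hk⟩ := hps a ⟨1, by simp⟩
    have hdrop : ∀ v, IsPrefixSum α v → IsPrefixSum (β.drop k) v := by
      rintro v ⟨i, rfl⟩
      obtain ⟨k', hk'⟩ := hps (a + (α.take i).sum) ⟨i + 1, by simp⟩
      rcases le_or_gt k' k with hle | hlt
      · have : (β.take k').sum ≤ (β.take k).sum := by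
          rw [← List.take_append_drop k' (β.take k), List.take_take, min_eq_left hle,
            List.sum_append]
          exact Nat.le_add_right _ _
        exact ⟨0, by rw [List.take_zero, List.sum_nil]; omega⟩
      · refine ⟨k' - k, ?_⟩
        rw [← Nat.add_sub_cancel' hlt.le, List.take_add, List.sum_append, hk] at hk'
        omega
    have hsum' : (β.drop k).sum = α.sum := by
      have := List.sum_take_add_sum_drop β k
      simp only [List.sum_cons] at hsum
      omega
    obtain ⟨L, hL, hLsum⟩ := ih (fun b hb => hβ b (List.mem_of_mem_drop hb)) hsum' hdrop
    exact ⟨β.take k :: L, by simp [hL], by simp [hLsum, hk]⟩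

theorem refines_filter_pos_iff {β α : List ℕ} :
    Refines (β.filter fun e => decide (0 < e)) (α.filter fun e => decide (0 < e)) ↔
      β.sum = α.sum ∧ ∀ v, IsPrefixSum α v → IsPrefixSum β v := by
  simp only [← sum_filter_pos β, ← sum_filter_pos α, ← isPrefixSum_filter_pos_iff β,
    ← isPrefixSum_filter_pos_iff α]
  refine ⟨fun h => ⟨h.sum_eq, fun _ => h.isPrefixSum⟩,
    fun h => refines_of_isPrefixSum ?_ h.1 h.2⟩
  intro b hb
  simpa using List.of_mem_filter hb

def prefixSum (f : ℕ → ℕ) (i : ℕ) : ℕ := ∑ j ∈ Finset.range i, f j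

theorem prefixSum_succ (f : ℕ → ℕ) (i : ℕ) : prefixSum f (i + 1) = prefixSum f i + f i :=
  Finset.sum_range_succ f i

theorem prefixSum_mono (f : ℕ → ℕ) : Monotone (prefixSum f) := fun _ _ h =>
  Finset.sum_le_sum_of_subset (Finset.range_subset_range.2 h)

theorem prefixSum_min {f : ℕ → ℕ} {N : ℕ} (hf : ∀ j, N ≤ j → f j = 0) (i : ℕ) :
    prefixSum f (min i N) = prefixSum f i := by
  rcases le_total i N with h | h
  · rw [min_eq_left h]
  · rw [min_eq_right h]
    exact Finset.sum_subset (Finset.range_subset_range.2 h) fun j _ hj => hf j (by simpa using hj)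

theorem sum_map_range (f : ℕ → ℕ) (n : ℕ) : ((List.range n).map f).sum = prefixSum f n := by
  induction n with
  | zero => rfl
  | succ n ih => simp [List.range_succ, ih, prefixSum_succ]

theorem isPrefixSum_map_range_iff {f : ℕ → ℕ} {N : ℕ} (hf : ∀ j, N ≤ j → f j = 0) (v : ℕ) :
    IsPrefixSum ((List.range N).map f) v ↔ ∃ i, prefixSum f i = v := by
  have htake (i : ℕ) : (((List.range N).map f).take i).sum = prefixSum f i := by
    rw [← List.map_take, List.take_range, sum_map_range, prefixSum_min hf]
  simp only [IsPrefixSum, htake]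

noncomputable def labelOf (M : ℕ → ℕ) (k : ℕ) : ℕ := sInf {j | k ≤ M j}

section LabelOf
variable {M : ℕ → ℕ} {k : ℕ}

theorem labelOf_le_iff (hM : Monotone M) (hk : ∃ j, k ≤ M j) {j : ℕ} :
    labelOf M k ≤ j ↔ k ≤ M j :=
  ⟨fun h => le_trans (Nat.sInf_mem (s := {j | k ≤ M j}) hk) (hM h), fun h => Nat.sInf_le h⟩

theorem labelOf_mono (hM : Monotone M) {k' : ℕ} (hk' : ∃ j, k' ≤ M j) (h : k ≤ k') :
    labelOf M k ≤ labelOf M k' :=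
  have hk : k ≤ M (labelOf M k') := le_trans h (Nat.sInf_mem (s := {j | k' ≤ M j}) hk')
  (labelOf_le_iff hM ⟨_, hk⟩).2 hk

theorem labelOf_lt_labelOf (hM : Monotone M) {k' c : ℕ} (hk' : ∃ j, k' ≤ M j) (h : k ≤ M c)
    (h' : M c < k') : labelOf M k < labelOf M k' :=
  ((labelOf_le_iff hM ⟨c, h⟩).2 h).trans_lt <|
    lt_of_not_ge fun hle => h'.not_ge ((labelOf_le_iff hM hk').1 hle)

theorem one_le_labelOf (hM : Monotone M) (hk : ∃ j, k ≤ M j) (h0 : M 0 < k) :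
    1 ≤ labelOf M k :=
  Nat.one_le_iff_ne_zero.2 fun h => h0.not_ge ((labelOf_le_iff hM hk).1 h.le)

theorem labelOf_eq_succ_iff (hM : Monotone M) (hk : ∃ j, k ≤ M j) (n : ℕ) :
    labelOf M k = n + 1 ↔ M n < k ∧ k ≤ M (n + 1) := by
  rw [← labelOf_le_iff hM hk, ← not_le, ← labelOf_le_iff hM hk]
  omega

end LabelOf

noncomputable def rankIn {α β : Type*} [LinearOrder β] (S : Set α) (f : α → β) (a : α) :
    ℕ :=
  {b | b ∈ S ∧ f b ≤ f a}.ncard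

section RankIn
variable {α β : Type*} [LinearOrder β] {S : Set α} {f : α → β}

theorem rankIn_le_rankIn (hS : S.Finite) {a b : α} (h : f a ≤ f b) :
    rankIn S f a ≤ rankIn S f b :=
  Set.ncard_le_ncard (fun _ hc => ⟨hc.1, hc.2.trans h⟩) (hS.subset fun _ hc => hc.1)

theorem rankIn_lt_rankIn (hS : S.Finite) {a b : α} (hb : b ∈ S) (h : f a < f b) :
    rankIn S f a < rankIn S f b :=
  Set.ncard_lt_ncard
    ⟨fun _ hc => ⟨hc.1, hc.2.trans h.le⟩, fun hsub => (hsub ⟨hb, le_rfl⟩).2.not_gt h⟩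
    (hS.subset fun _ hc => hc.1)

theorem rankIn_le_rankIn_iff (hS : S.Finite) {a b : α} (ha : a ∈ S) :
    rankIn S f a ≤ rankIn S f b ↔ f a ≤ f b :=
  ⟨fun h => not_lt.1 fun hlt => (rankIn_lt_rankIn hS ha hlt).not_ge h, rankIn_le_rankIn hS⟩

theorem rankIn_mem_Icc (hS : S.Finite) {a : α} (ha : a ∈ S) :
    rankIn S f a ∈ Set.Icc 1 S.ncard :=
  ⟨(Set.ncard_pos (hS.subset fun _ hc => hc.1)).2 ⟨a, (⟨ha, le_rfl⟩ : a ∈ S ∧ f a ≤ f a)⟩,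
    Set.ncard_le_ncard (fun _ hc => hc.1) hS⟩

theorem rankIn_injOn (hS : S.Finite) (hf : S.InjOn f) : S.InjOn (rankIn S f) := fun _ ha _ hb h =>
  hf ha hb (le_antisymm ((rankIn_le_rankIn_iff hS ha).1 h.le) ((rankIn_le_rankIn_iff hS hb).1 h.ge))

theorem rankIn_image (hS : S.Finite) (hf : S.InjOn f) : rankIn S f '' S = Set.Icc 1 S.ncard := by
  refine Set.eq_of_subset_of_ncard_le (Set.image_subset_iff.2 fun a ha => rankIn_mem_Icc hS ha) ?_
    (Set.finite_Icc _ _)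
  rw [(rankIn_injOn hS hf).ncard_image, ← Finset.coe_Icc, Set.ncard_coe_finset, Nat.card_Icc]
  omega

theorem ncard_rankIn_mem_Ioc (hS : S.Finite) (hf : S.InjOn f) {a b : ℕ} (hb : b ≤ S.ncard) :
    {s | s ∈ S ∧ rankIn S f s ∈ Set.Ioc a b}.ncard = b - a := by
  have hIoc : Set.Ioc a b ⊆ Set.Icc 1 S.ncard := fun r hr => ⟨by grind, hr.2.trans hb⟩
  change (S ∩ rankIn S f ⁻¹' Set.Ioc a b).ncard = b - a
  rw [← ((rankIn_injOn hS hf).mono Set.inter_subset_left).ncard_image, Set.image_inter_preimage,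
    rankIn_image hS hf, Set.inter_eq_right.2 hIoc, ← Finset.coe_Ioc, Set.ncard_coe_finset,
    Nat.card_Ioc]

end RankIn

theorem IsPartitionFn.finite_shape {lam : ℕ → ℕ} (hlam : IsPartitionFn lam) :
    {x : ℕ × ℕ | InShape lam x}.Finite := by
  obtain ⟨hanti, N, hN⟩ := hlam
  refine ((Set.finite_Iio N).prod (Set.finite_Iio (lam 0))).subset
    fun x (hx : x.2 < lam x.1) => ⟨?_, hx.trans_le (hanti (Nat.zero_le _))⟩
  by_contra h
  rw [hN x.1 (not_lt.1 h)] at hx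
  exact Nat.not_lt_zero _ hx

theorem GenomicTableau.ext {lam : ℕ → ℕ} {T T' : GenomicTableau lam} (he : T.entry = T'.entry)
    (hg : T.sameGene = T'.sameGene) : T = T' := by
  cases T
  cases T'
  subst he hg
  rfl

namespace GenomicTableau
variable {lam : ℕ → ℕ} (T : GenomicTableau lam)

theorem eq_of_col_eq_of_entry_eq {x y : ℕ × ℕ} (hx : InShape lam x) (hy : InShape lam y)
    (hc : x.2 = y.2) (he : T.entry x = T.entry y) : x = y := by
  obtain ⟨a, c⟩ := x
  obtain ⟨b, c'⟩ := y
  obtain rfl : c = c' := hc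
  rcases lt_trichotomy a b with h | rfl | h
  · exact absurd he (T.col_strict a b c h hy).ne
  · rfl
  · exact absurd he (T.col_strict b a c h hx).ne'

theorem leadCol_le_col {x : ℕ × ℕ} (hx : InShape lam x) : leadCol T x ≤ x.2 :=
  Nat.sInf_le ⟨x, T.sameGene_refl x hx, rfl⟩

theorem exists_sameGene_isGeneLeader {x : ℕ × ℕ} (hx : InShape lam x) :
    ∃ w, T.sameGene x w ∧ IsGeneLeader T w ∧ w.2 = leadCol T x := by
  obtain ⟨w, hw, hwc⟩ := Nat.sInf_mem (s := {c | ∃ y, T.sameGene x y ∧ y.2 = c})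
    ⟨x.2, x, T.sameGene_refl x hx, rfl⟩
  refine ⟨w, hw, ⟨(T.sameGene_mem x w hw).2, fun z hz => ?_⟩, hwc⟩
  rw [hwc]
  exact Nat.sInf_le ⟨z, T.sameGene_trans x w z hw hz, rfl⟩

theorem leadCol_eq_of_sameGene {x y : ℕ × ℕ} (h : T.sameGene x y) :
    leadCol T x = leadCol T y := by
  have hiff : ∀ z, T.sameGene x z ↔ T.sameGene y z := fun z =>
    ⟨T.sameGene_trans y x z (T.sameGene_symm x y h), T.sameGene_trans x y z h⟩
  simp only [leadCol, hiff]

end GenomicTableau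

theorem IsGeneLeader.leadCol_eq {lam : ℕ → ℕ} {T : GenomicTableau lam} {w : ℕ × ℕ}
    (hw : IsGeneLeader T w) : leadCol T w = w.2 := by
  obtain ⟨z, hz, -, hzc⟩ := T.exists_sameGene_isGeneLeader hw.1
  exact le_antisymm (T.leadCol_le_col hw.1) (hzc ▸ hw.2 z hz)

noncomputable def geneKey {lam : ℕ → ℕ} (T : GenomicTableau lam) (x : ℕ × ℕ) :
    ℕ ×ₗ ℕ :=
  toLex (T.entry x, leadCol T x)

noncomputable def numGenesLE {lam : ℕ → ℕ} (T : GenomicTableau lam) (i : ℕ) : ℕ :=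
  {w | IsGeneLeader T w ∧ T.entry w ≤ i}.ncard

noncomputable def numGenes {lam : ℕ → ℕ} (T : GenomicTableau lam) : ℕ :=
  {w | IsGeneLeader T w}.ncard

namespace GenomicTableau
variable {lam : ℕ → ℕ} (T : GenomicTableau lam)

theorem geneKey_eq_of_sameGene {x y : ℕ × ℕ} (h : T.sameGene x y) :
    geneKey T x = geneKey T y := by
  rw [geneKey, geneKey, T.sameGene_entry x y h, T.leadCol_eq_of_sameGene h]

theorem geneKey_le_geneKey_iff {x y : ℕ × ℕ} : geneKey T x ≤ geneKey T y ↔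
    T.entry x < T.entry y ∨ T.entry x = T.entry y ∧ leadCol T x ≤ leadCol T y :=
  Prod.Lex.toLex_le_toLex

theorem injOn_geneKey : {w | IsGeneLeader T w}.InjOn (geneKey T) := fun w hw w' hw' h => by
  simp only [geneKey, toLex_inj, Prod.mk.injEq, IsGeneLeader.leadCol_eq hw,
    IsGeneLeader.leadCol_eq hw'] at h
  exact T.eq_of_col_eq_of_entry_eq hw.1 hw'.1 h.2 h.1

theorem kStd_eq_rankIn {x : ℕ × ℕ} (hx : InShape lam x) :
    kStd T x = rankIn {w | IsGeneLeader T w} (geneKey T) x := by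
  rw [kStd, if_pos hx, rankIn]
  congr 1
  ext y
  exact and_congr_right fun hy => by rw [geneKey_le_geneKey_iff, IsGeneLeader.leadCol_eq hy]

theorem kStd_eq_of_sameGene {x y : ℕ × ℕ} (h : T.sameGene x y) : kStd T x = kStd T y := by
  obtain ⟨hx, hy⟩ := T.sameGene_mem x y h
  rw [T.kStd_eq_rankIn hx, T.kStd_eq_rankIn hy, rankIn, rankIn, T.geneKey_eq_of_sameGene h]

theorem numGenesLE_zero : numGenesLE T 0 = 0 := by
  have hempty : {w | IsGeneLeader T w ∧ T.entry w ≤ 0} = ∅ :=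
    Set.eq_empty_of_forall_notMem fun w hw => by have := T.entry_pos w hw.1.1; have := hw.2; omega
  rw [numGenesLE, hempty, Set.ncard_empty]

variable (hf : {x : ℕ × ℕ | InShape lam x}.Finite)
include hf

theorem finite_isGeneLeader : {w | IsGeneLeader T w}.Finite := hf.subset fun _ hw => hw.1

theorem numGenesLE_mono : Monotone (numGenesLE T) := fun _ _ h =>
  Set.ncard_le_ncard (fun _ hw => ⟨hw.1, hw.2.trans h⟩)
    ((T.finite_isGeneLeader hf).subset fun _ hw => hw.1)

theorem kStd_le_numGenesLE {x : ℕ × ℕ} (hx : InShape lam x) :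
    kStd T x ≤ numGenesLE T (T.entry x) := by
  rw [T.kStd_eq_rankIn hx]
  refine Set.ncard_le_ncard (fun y hy => ⟨hy.1, ?_⟩)
    ((T.finite_isGeneLeader hf).subset fun _ hw => hw.1)
  have := T.geneKey_le_geneKey_iff.1 hy.2
  omega

theorem numGenesLE_pred_lt_kStd {x : ℕ × ℕ} (hx : InShape lam x) :
    numGenesLE T (T.entry x - 1) < kStd T x := by
  obtain ⟨w, hxw, hw, -⟩ := T.exists_sameGene_isGeneLeader hx
  have hpos := T.entry_pos x hx
  rw [T.kStd_eq_rankIn hx]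
  refine Set.ncard_lt_ncard ⟨fun y hy => ⟨hy.1, ?_⟩, fun hsub => ?_⟩
    ((T.finite_isGeneLeader hf).subset fun _ hw => hw.1)
  · exact T.geneKey_le_geneKey_iff.2 (Or.inl (by have := hy.2; omega))
  · have := (hsub ⟨hw, (T.geneKey_eq_of_sameGene hxw).ge⟩).2
    rw [← T.sameGene_entry x w hxw] at this
    omega

theorem entry_eq_labelOf_kStd {x : ℕ × ℕ} (hx : InShape lam x) :
    T.entry x = labelOf (numGenesLE T) (kStd T x) := by
  have hpos := T.entry_pos x hx
  obtain ⟨n, hn⟩ : ∃ n, T.entry x = n + 1 := ⟨T.entry x - 1, by omega⟩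
  have h1 := T.numGenesLE_pred_lt_kStd hf hx
  have h2 := T.kStd_le_numGenesLE hf hx
  rw [hn] at h1 h2 ⊢
  exact ((labelOf_eq_succ_iff (T.numGenesLE_mono hf) ⟨_, h2⟩ n).2 ⟨h1, h2⟩).symm

theorem col_lt_of_kStd_lt {x y : ℕ × ℕ} (hx : InShape lam x) (hy : InShape lam y)
    (he : T.entry x = T.entry y) (hk : kStd T x < kStd T y) : x.2 < y.2 := by
  obtain ⟨wx, hxwx, hwx, hwxc⟩ := T.exists_sameGene_isGeneLeader hx
  obtain ⟨wy, hywy, hwy, hwyc⟩ := T.exists_sameGene_isGeneLeader hy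
  have hkey : geneKey T x < geneKey T y := lt_of_not_ge fun h => hk.not_ge <| by
    rw [T.kStd_eq_rankIn hx, T.kStd_eq_rankIn hy]
    exact rankIn_le_rankIn (T.finite_isGeneLeader hf) h
  have hlead : wx.2 < wy.2 := by
    have := (T.geneKey_le_geneKey_iff (x := y) (y := x)).not.1 hkey.not_ge
    omega
  have hdiff : ¬ T.sameGene x y := fun h => hk.ne (T.kStd_eq_of_sameGene h)
  have hewy : T.entry wy = T.entry wx := by
    rw [← T.sameGene_entry y wy hywy, ← T.sameGene_entry x wx hxwx, he]
  by_contra hcol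
  rcases (show wy.2 ≤ x.2 by have := T.leadCol_le_col hy; omega).eq_or_lt with heq | hlt
  · have hwyx := T.eq_of_col_eq_of_entry_eq hwy.1 hx heq (by rw [hewy, T.sameGene_entry x wx hxwx])
    exact hdiff (T.sameGene_symm y x (hwyx ▸ hywy))
  · have hwxwy := T.sameGene_interval wx wy x (T.sameGene_symm x wx hxwx) hwy.1 hewy hlead hlt
    exact hdiff (T.sameGene_trans x wy y (T.sameGene_trans x wx wy hxwx hwxwy)
      (T.sameGene_symm y wy hywy))

theorem numGenesLE_succ (i : ℕ) : numGenesLE T (i + 1) = numGenesLE T i + wt T i := by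
  have hsplit : {w | IsGeneLeader T w ∧ T.entry w ≤ i + 1} =
      {w | IsGeneLeader T w ∧ T.entry w ≤ i} ∪
        {w | IsGeneLeader T w ∧ T.entry w = i + 1} := by
    ext w
    simp only [Set.mem_union, Set.mem_ofPred_eq, Nat.le_succ_iff, and_or_left]
  rw [numGenesLE, hsplit, Set.ncard_union_eq _ ((T.finite_isGeneLeader hf).subset fun _ hw => hw.1)
    ((T.finite_isGeneLeader hf).subset fun _ hw => hw.1)]
  · rfl
  · exact Set.disjoint_left.2 fun w hw hw' => by have := hw.2; have := hw'.2; omega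

theorem numGenesLE_eq_prefixSum (i : ℕ) : numGenesLE T i = prefixSum (wt T) i := by
  induction i with
  | zero => exact T.numGenesLE_zero
  | succ i ih => rw [T.numGenesLE_succ hf, ih, prefixSum_succ]

theorem entry_le_maxEntry {x : ℕ × ℕ} (hx : InShape lam x) : T.entry x ≤ maxEntry T :=
  le_csSup (hf.image T.entry).bddAbove ⟨x, hx, rfl⟩

theorem wt_eq_zero {j : ℕ} (hj : maxEntry T ≤ j) : wt T j = 0 := by
  have hempty : {w | IsGeneLeader T w ∧ T.entry w = j + 1} = ∅ :=
    Set.eq_empty_of_forall_notMem fun w hw => by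
      have := T.entry_le_maxEntry hf hw.1.1
      have := hw.2
      omega
  rw [wt, hempty, Set.ncard_empty]

theorem numGenesLE_eq_numGenes {i : ℕ} (hi : maxEntry T ≤ i) : numGenesLE T i = numGenes T :=
  congrArg Set.ncard <| Set.ext fun _ =>
    and_iff_left_of_imp fun hw => (T.entry_le_maxEntry hf hw.1).trans hi

end GenomicTableau

structure CoarsensTo {lam : ℕ → ℕ} (V U : GenomicTableau lam) : Prop where
  sameGene_iff : ∀ x y, V.sameGene x y ↔ U.sameGene x y
  entry_le_entry : ∀ x y, InShape lam x → InShape lam y → V.entry x ≤ V.entry y →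
    U.entry x ≤ U.entry y
  col_lt_col : ∀ x y, InShape lam x → InShape lam y → U.entry x = U.entry y →
    V.entry x < V.entry y → x.2 < y.2

namespace CoarsensTo
variable {lam : ℕ → ℕ} {V T U U' : GenomicTableau lam}

theorem refl (V : GenomicTableau lam) : CoarsensTo V V :=
  ⟨fun _ _ => Iff.rfl, fun _ _ _ _ h => h, fun _ _ _ _ he hlt => absurd he hlt.ne⟩

theorem regStep (h : CoarsensTo V T) (s : RegStep T U) : CoarsensTo V U := by
  obtain ⟨i, -, -, heast, hentry, hgene⟩ := s
  refine ⟨fun x y => (h.sameGene_iff x y).trans (hgene x y).symm, fun x y hx hy hle => ?_,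
    fun x y hx hy he hlt => ?_⟩
  · have := h.entry_le_entry x y hx hy hle
    rw [hentry, hentry]
    split_ifs <;> omega
  · rw [hentry, hentry] at he
    rcases (h.entry_le_entry x y hx hy hlt.le).eq_or_lt with heq | hlt'
    · exact h.col_lt_col x y hx hy heq hlt
    · have : T.entry y = i ∧ T.entry x = i - 1 := by split_ifs at he <;> omega
      exact heast y x hy hx this.1 this.2

theorem of_reflTransGen (h : Relation.ReflTransGen RegStep V U) : CoarsensTo V U := by
  induction h with
  | refl => exact refl V
  | tail _ s ih => exact ih.regStep s

theorem sameGene_eq (h : CoarsensTo V U) : V.sameGene = U.sameGene :=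
  funext fun x => funext fun y => propext (h.sameGene_iff x y)

theorem isGeneLeader_iff (h : CoarsensTo V U) (w : ℕ × ℕ) :
    IsGeneLeader V w ↔ IsGeneLeader U w := by
  rw [IsGeneLeader, IsGeneLeader, h.sameGene_eq]

theorem leadCol_eq (h : CoarsensTo V U) : leadCol V = leadCol U := by
  funext x
  rw [leadCol, leadCol, h.sameGene_eq]

theorem numGenes_eq (h : CoarsensTo V U) : numGenes V = numGenes U := by
  simp only [numGenes, h.isGeneLeader_iff]

theorem lex_le_iff (h : CoarsensTo V U) {x y : ℕ × ℕ} (hx : InShape lam x)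
    (hy : InShape lam y) :
    (V.entry x < V.entry y ∨ V.entry x = V.entry y ∧ x.2 ≤ y.2) ↔
      (U.entry x < U.entry y ∨ U.entry x = U.entry y ∧ x.2 ≤ y.2) := by
  have h1 := h.entry_le_entry x y hx hy
  have h2 := h.entry_le_entry y x hy hx
  have h3 := h.col_lt_col x y hx hy
  have h4 := h.col_lt_col y x hy hx
  omega

theorem geneKey_le_iff (h : CoarsensTo V U) {x y : ℕ × ℕ} (hx : InShape lam x)
    (hy : InShape lam y) : geneKey V x ≤ geneKey V y ↔ geneKey U x ≤ geneKey U y := by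
  obtain ⟨wx, hxwx, hwx, -⟩ := U.exists_sameGene_isGeneLeader hx
  obtain ⟨wy, hywy, hwy, -⟩ := U.exists_sameGene_isGeneLeader hy
  have hV : ∀ {a b}, U.sameGene a b → V.sameGene a b := fun hab => (h.sameGene_iff _ _).2 hab
  rw [V.geneKey_eq_of_sameGene (hV hxwx), V.geneKey_eq_of_sameGene (hV hywy),
    U.geneKey_eq_of_sameGene hxwx, U.geneKey_eq_of_sameGene hywy, V.geneKey_le_geneKey_iff,
    U.geneKey_le_geneKey_iff, h.leadCol_eq, hwx.leadCol_eq, hwy.leadCol_eq]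
  exact h.lex_le_iff hwx.1 hwy.1

theorem kStd_eq (h : CoarsensTo V U) (x : ℕ × ℕ) : kStd V x = kStd U x := by
  by_cases hx : InShape lam x
  · rw [V.kStd_eq_rankIn hx, U.kStd_eq_rankIn hx, rankIn, rankIn]
    congr 1
    ext w
    simp only [Set.mem_ofPred_eq, h.isGeneLeader_iff]
    exact and_congr_right fun hw => h.geneKey_le_iff hw.1 hx
  · rw [kStd, kStd, if_neg hx, if_neg hx]

theorem exists_numGenesLE_eq (hf : {x : ℕ × ℕ | InShape lam x}.Finite) (h : CoarsensTo V U)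
    (i : ℕ) : ∃ c, numGenesLE U i = numGenesLE V c := by
  rcases Set.eq_empty_or_nonempty {w | IsGeneLeader U w ∧ U.entry w ≤ i} with hS | hS
  · exact ⟨0, by rw [numGenesLE, hS, Set.ncard_empty, V.numGenesLE_zero]⟩
  obtain ⟨w₀, hw₀, hmax⟩ := Set.exists_max_image _ V.entry
    ((U.finite_isGeneLeader hf).subset fun _ hw => hw.1) hS
  refine ⟨V.entry w₀, congrArg Set.ncard (Set.ext fun w => ?_)⟩
  rw [Set.mem_ofPred_eq, Set.mem_ofPred_eq, h.isGeneLeader_iff]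
  exact ⟨fun hw => ⟨hw.1, hmax w hw⟩, fun hw =>
    ⟨hw.1, (h.entry_le_entry w w₀ hw.1.1 hw₀.1.1 hw.2).trans hw₀.2⟩⟩

theorem entry_le_of_isQY (h : CoarsensTo V U) (h' : CoarsensTo V U') (hU : IsQY U) :
    ∀ x, InShape lam x → U.entry x ≤ U'.entry x := by
  suffices ∀ i x, InShape lam x → U.entry x = i → i ≤ U'.entry x from
    fun x hx => this _ x hx rfl
  intro i
  induction i using Nat.strong_induction_on with
  | _ i ih =>
  intro x hx hxi
  have hpos := U'.entry_pos x hx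
  by_cases hi : i ≤ 1
  · omega
  obtain ⟨a, b, ha, hb, hai, hbi, hab⟩ := hU i (by omega) ⟨x, hx, hxi⟩
  have hb' := ih (i - 1) (by omega) b hb hbi
  have hVbx : V.entry b < V.entry x :=
    lt_of_not_ge fun hle => by have := h.entry_le_entry x b hx hb hle; omega
  have hVba : V.entry b < V.entry a :=
    lt_of_not_ge fun hle => by have := h.entry_le_entry a b ha hb hle; omega
  have h1 := h'.entry_le_entry b x hb hx hVbx.le
  by_contra hlt
  -- if `U'` merges `b` with `x`, then `b` lies west of `x` and `x` west of `a` (otherwise `U'`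
  -- also merges `b` with `a`), contradicting `a.2 ≤ b.2`
  have hU'bx : U'.entry b = U'.entry x := by omega
  have hcol_bx := h'.col_lt_col b x hb hx hU'bx hVbx
  rcases le_or_gt (V.entry a) (V.entry x) with hax | hxa
  · have h2 := h'.entry_le_entry a x ha hx hax
    have h3 := h'.entry_le_entry b a hb ha hVba.le
    have := h'.col_lt_col b a hb ha (by omega) hVba
    omega
  · have := h.col_lt_col x a hx ha (by omega) hxa
    omega

theorem eq_of_isQY (h : CoarsensTo V U) (h' : CoarsensTo V U') (hU : IsQY U) (hU' : IsQY U') :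
    U = U' := by
  refine GenomicTableau.ext (funext fun x => ?_) (h.sameGene_eq.symm.trans h'.sameGene_eq)
  by_cases hx : InShape lam x
  · exact le_antisymm (h.entry_le_of_isQY h' hU x hx) (h'.entry_le_of_isQY h hU' x hx)
  · rw [U.entry_zero x hx, U'.entry_zero x hx]

end CoarsensTo

namespace GenomicTableau
variable {lam : ℕ → ℕ} (U : GenomicTableau lam) (hf : {x : ℕ × ℕ | InShape lam x}.Finite)
  {f : ℕ → ℕ} (hps : ∀ i, ∃ c, numGenesLE U i = prefixSum f c)
include hf hps

theorem exists_kStd_le_prefixSum {x : ℕ × ℕ} (hx : InShape lam x) :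
    ∃ c, kStd U x ≤ prefixSum f c := by
  obtain ⟨c, hc⟩ := hps (U.entry x)
  exact ⟨c, hc ▸ U.kStd_le_numGenesLE hf hx⟩

theorem labelOf_kStd_lt_of_entry_lt {x y : ℕ × ℕ} (hx : InShape lam x) (hy : InShape lam y)
    (hxy : U.entry x < U.entry y) :
    labelOf (prefixSum f) (kStd U x) < labelOf (prefixSum f) (kStd U y) := by
  obtain ⟨c, hc⟩ := hps (U.entry x)
  refine labelOf_lt_labelOf (prefixSum_mono f) (U.exists_kStd_le_prefixSum hf hps hy)
    (c := c) ?_ ?_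
  · exact hc ▸ U.kStd_le_numGenesLE hf hx
  · rw [← hc]
    exact (U.numGenesLE_mono hf (by omega : U.entry x ≤ U.entry y - 1)).trans_lt
      (U.numGenesLE_pred_lt_kStd hf hy)

theorem entry_eq_of_labelOf_kStd_eq {x y : ℕ × ℕ} (hx : InShape lam x) (hy : InShape lam y)
    (h : labelOf (prefixSum f) (kStd U x) = labelOf (prefixSum f) (kStd U y)) :
    U.entry x = U.entry y := by
  rcases lt_trichotomy (U.entry x) (U.entry y) with hlt | heq | hgt
  · exact absurd h (U.labelOf_kStd_lt_of_entry_lt hf hps hx hy hlt).ne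
  · exact heq
  · exact absurd h (U.labelOf_kStd_lt_of_entry_lt hf hps hy hx hgt).ne'

end GenomicTableau

noncomputable def GenomicTableau.ofKStd {lam : ℕ → ℕ} (hlam : IsPartitionFn lam)
    (U : GenomicTableau lam) (f : ℕ → ℕ)
    (hps : ∀ i, ∃ c, numGenesLE U i = prefixSum f c) : GenomicTableau lam where
  entry x := if InShape lam x then labelOf (prefixSum f) (kStd U x) else 0
  sameGene := U.sameGene
  entry_pos x hx := by
    rw [if_pos hx]
    exact one_le_labelOf (prefixSum_mono f) (U.exists_kStd_le_prefixSum hlam.finite_shape hps hx)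
      ((Nat.zero_le _).trans_lt (U.numGenesLE_pred_lt_kStd hlam.finite_shape hx))
  entry_zero x hx := if_neg hx
  row_weak r c₁ c₂ hc hsh := by
    have hsh₁ : InShape lam (r, c₁) := lt_of_le_of_lt hc hsh
    rw [if_pos hsh, if_pos hsh₁]
    rcases (U.row_weak r c₁ c₂ hc hsh).eq_or_lt with he | hlt
    · refine labelOf_mono (prefixSum_mono f)
        (U.exists_kStd_le_prefixSum hlam.finite_shape hps hsh) (not_lt.1 fun hk => ?_)
      exact (U.col_lt_of_kStd_lt hlam.finite_shape hsh hsh₁ he.symm hk).not_ge hc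
    · exact (U.labelOf_kStd_lt_of_entry_lt hlam.finite_shape hps hsh₁ hsh hlt).le
  col_strict r₁ r₂ c h hsh := by
    have hsh₁ : InShape lam (r₁, c) := lt_of_lt_of_le hsh (hlam.1 h.le)
    rw [if_pos hsh, if_pos hsh₁]
    exact U.labelOf_kStd_lt_of_entry_lt hlam.finite_shape hps hsh₁ hsh
      (U.col_strict r₁ r₂ c h hsh)
  sameGene_mem := U.sameGene_mem
  sameGene_refl := U.sameGene_refl
  sameGene_symm := U.sameGene_symm
  sameGene_trans := U.sameGene_trans
  sameGene_entry x y h := by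
    obtain ⟨hx, hy⟩ := U.sameGene_mem x y h
    rw [if_pos hx, if_pos hy, U.kStd_eq_of_sameGene h]
  sameGene_interval x y z hxz hy hey hxy hyz := by
    have hx := (U.sameGene_mem x z hxz).1
    rw [if_pos hy, if_pos hx] at hey
    exact U.sameGene_interval x y z hxz hy
      (U.entry_eq_of_labelOf_kStd_eq hlam.finite_shape hps hy hx hey) hxy hyz
  sameGene_row := U.sameGene_row

namespace GenomicTableau
variable {lam : ℕ → ℕ} (hlam : IsPartitionFn lam) (U : GenomicTableau lam) {f : ℕ → ℕ}
  (hps : ∀ i, ∃ c, numGenesLE U i = prefixSum f c)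

theorem coarsensTo_ofKStd : CoarsensTo (U.ofKStd hlam f hps) U where
  sameGene_iff _ _ := Iff.rfl
  entry_le_entry x y hx hy hle := by
    change (if _ then _ else _) ≤ (if _ then _ else _) at hle
    rw [if_pos hx, if_pos hy] at hle
    exact not_lt.1 fun hlt =>
      (U.labelOf_kStd_lt_of_entry_lt hlam.finite_shape hps hy hx hlt).not_ge hle
  col_lt_col x y hx hy he hlt := by
    change (if _ then _ else _) < (if _ then _ else _) at hlt
    rw [if_pos hx, if_pos hy] at hlt
    refine U.col_lt_of_kStd_lt hlam.finite_shape hx hy he (not_le.1 fun hk => hlt.not_ge ?_)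
    exact labelOf_mono (prefixSum_mono f) (U.exists_kStd_le_prefixSum hlam.finite_shape hps hx) hk

theorem wt_ofKStd (htot : ∀ c, prefixSum f c ≤ numGenes U) (n : ℕ) :
    wt (U.ofKStd hlam f hps) n = f n := by
  have hf := hlam.finite_shape
  have hset :
      {w | IsGeneLeader (U.ofKStd hlam f hps) w ∧ (U.ofKStd hlam f hps).entry w = n + 1} =
        {w | w ∈ {w | IsGeneLeader U w} ∧ rankIn {w | IsGeneLeader U w} (geneKey U) w ∈
          Set.Ioc (prefixSum f n) (prefixSum f (n + 1))} := by
    ext w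
    refine and_congr_right fun hw => ?_
    change (if _ then _ else _) = _ ↔ _
    rw [if_pos hw.1, labelOf_eq_succ_iff (prefixSum_mono f)
      (U.exists_kStd_le_prefixSum hf hps hw.1), U.kStd_eq_rankIn hw.1]
    rfl
  rw [wt, hset, ncard_rankIn_mem_Ioc (U.finite_isGeneLeader hf) U.injOn_geneKey (htot _),
    prefixSum_succ]
  omega

end GenomicTableau

namespace CoarsensTo
variable {lam : ℕ → ℕ} {V V' U : GenomicTableau lam}
  (hf : {x : ℕ × ℕ | InShape lam x}.Finite)
include hf

theorem numGenesLE_eq_prefixSum_wt (h : CoarsensTo V U) (i : ℕ) :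
    ∃ c, numGenesLE U i = prefixSum (wt V) c := by
  obtain ⟨c, hc⟩ := h.exists_numGenesLE_eq hf i
  exact ⟨c, hc.trans (V.numGenesLE_eq_prefixSum hf c)⟩

theorem prefixSum_wt_le_numGenes (h : CoarsensTo V U) (c : ℕ) :
    prefixSum (wt V) c ≤ numGenes U := by
  rw [← V.numGenesLE_eq_prefixSum hf, ← h.numGenes_eq,
    ← V.numGenesLE_eq_numGenes hf (le_max_right c (maxEntry V))]
  exact V.numGenesLE_mono hf (le_max_left _ _)

theorem entry_eq_labelOf (h : CoarsensTo V U) {x : ℕ × ℕ} (hx : InShape lam x) :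
    V.entry x = labelOf (prefixSum (wt V)) (kStd U x) := by
  rw [V.entry_eq_labelOf_kStd hf hx, h.kStd_eq, funext (V.numGenesLE_eq_prefixSum hf)]

theorem eq_of_wt_eq (h : CoarsensTo V U) (h' : CoarsensTo V' U) (hwt : ∀ n, wt V n = wt V' n) :
    V = V' := by
  refine GenomicTableau.ext (funext fun x => ?_) (h.sameGene_eq.trans h'.sameGene_eq.symm)
  by_cases hx : InShape lam x
  · rw [h.entry_eq_labelOf hf hx, h'.entry_eq_labelOf hf hx, funext hwt]
  · rw [V.entry_zero x hx, V'.entry_zero x hx]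

end CoarsensTo

theorem posPart_eq_filter (m : ℕ →₀ ℕ) {N : ℕ} (hN : m.support ⊆ Finset.range N) :
    posPart m = ((List.range N).map m).filter fun e => decide (0 < e) := by
  unfold _root_.posPart
  rw [List.filter_map]
  congr 1
  refine (List.pairwise_lt_range.sublist List.filter_sublist).eq_of_mem_iff
    (Finset.sortedLT_sort m.support).pairwise (fun j => ?_) |>.symm
  simp only [List.mem_filter, List.mem_range, Function.comp_apply, decide_eq_true_eq,
    Finset.mem_sort, Finsupp.mem_support_iff]
  exact ⟨fun h => h.2.ne', fun h =>
    ⟨Finset.mem_range.1 (hN (Finsupp.mem_support_iff.2 h)), Nat.pos_of_ne_zero h⟩⟩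

theorem refines_posPart_wtPos_iff {lam : ℕ → ℕ} (hf : {x : ℕ × ℕ | InShape lam x}.Finite)
    (U : GenomicTableau lam) (m : ℕ →₀ ℕ) :
    Refines (posPart m) (wtPos U) ↔
      (∀ i, ∃ c, numGenesLE U i = prefixSum m c) ∧ ∀ c, prefixSum m c ≤ numGenes U := by
  obtain ⟨N, hN⟩ := Finset.exists_nat_subset_range m.support
  have hm : ∀ j, N ≤ j → m j = 0 := fun j hj =>
    Finsupp.notMem_support_iff.1 fun h => absurd (Finset.mem_range.1 (hN h)) (not_lt.2 hj)
  have hprefix (c : ℕ) : prefixSum m c ≤ prefixSum m N := by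
    rw [← prefixSum_min hm c]
    exact prefixSum_mono _ (min_le_right c N)
  rw [posPart_eq_filter m hN, wtPos, refines_filter_pos_iff, sum_map_range, sum_map_range,
    ← U.numGenesLE_eq_prefixSum hf, U.numGenesLE_eq_numGenes hf le_rfl]
  simp only [isPrefixSum_map_range_iff hm, isPrefixSum_map_range_iff fun j => U.wt_eq_zero hf,
    forall_exists_index, forall_apply_eq_imp_iff, ← U.numGenesLE_eq_prefixSum hf]
  constructor
  · rintro ⟨htot, hps⟩
    exact ⟨fun i => (hps i).imp fun _ => Eq.symm, fun c => htot ▸ hprefix c⟩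
  · rintro ⟨hps, htot⟩
    refine ⟨(htot N).antisymm ?_, fun i => (hps i).imp fun _ => Eq.symm⟩
    obtain ⟨c, hc⟩ := hps (maxEntry U)
    rw [← U.numGenesLE_eq_numGenes hf le_rfl, hc]
    exact hprefix c

theorem exists_coarsensTo_wt_iff {lam : ℕ → ℕ} (hlam : IsPartitionFn lam)
    (U : GenomicTableau lam) (m : ℕ →₀ ℕ) :
    (∃ V, CoarsensTo V U ∧ ∀ n, wt V n = m n) ↔ Refines (posPart m) (wtPos U) := by
  have hf := hlam.finite_shape
  rw [refines_posPart_wtPos_iff hf]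
  constructor
  · rintro ⟨V, h, hwt⟩
    have hm : wt V = m := funext hwt
    exact hm ▸ ⟨h.numGenesLE_eq_prefixSum_wt hf, h.prefixSum_wt_le_numGenes hf⟩
  · rintro ⟨hps, htot⟩
    exact ⟨U.ofKStd hlam m hps, U.coarsensTo_ofKStd hlam hps, U.wt_ofKStd hlam hps htot⟩

/-- **Lemma.** For any quasiYamanouchi genomic tableau `U` of shape `λ`, the generating
function of the regularization fiber over `U` is the fundamental quasisymmetric function
indexed by `wt(U)`:  `Σ_{V ∈ Gen(λ), reg(V) = U} x^{wt(V)} = F_{wt(U)}`. -/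
theorem regFiberSeries_eq_fundamental (lam : ℕ → ℕ) (hlam : IsPartitionFn lam)
    (reg : GenomicTableau lam → GenomicTableau lam)
    (hreg : ∀ T, Relation.ReflTransGen RegStep T (reg T) ∧ IsQY (reg T))
    (U : GenomicTableau lam) (hU : IsQY U) :
    regFiberSeries reg U = fundamentalF (wtPos U) := by
  have reg_eq_iff (V : GenomicTableau lam) : reg V = U ↔ CoarsensTo V U :=
    ⟨fun h => h ▸ CoarsensTo.of_reflTransGen (hreg V).1,
      fun h => (CoarsensTo.of_reflTransGen (hreg V).1).eq_of_isQY h (hreg V).2 hU⟩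
  funext m
  have hfiber : {V // reg V = U ∧ ∀ n, wt V n = m n} ≃
      {V // CoarsensTo V U ∧ ∀ n, wt V n = m n} :=
    Equiv.subtypeEquivRight fun V => and_congr_left' (reg_eq_iff V)
  have hsub : Subsingleton {V // CoarsensTo V U ∧ ∀ n, wt V n = m n} :=
    ⟨fun V V' => Subtype.ext <| V.2.1.eq_of_wt_eq hlam.finite_shape V'.2.1 fun n =>
      (V.2.2 n).trans (V'.2.2 n).symm⟩
  change (Nat.card {V // reg V = U ∧ ∀ n, wt V n = m n} : ℤ) =
    if Refines (posPart m) (wtPos U) then 1 else 0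
  rw [Nat.card_congr hfiber, ← exists_coarsensTo_wt_iff hlam U m]
  split_ifs with h
  · obtain ⟨V, hV⟩ := h
    rw [Nat.card_eq_one_iff_unique.2 ⟨hsub, ⟨V, hV⟩⟩, Nat.cast_one]
  · have : IsEmpty {V // CoarsensTo V U ∧ ∀ n, wt V n = m n} := ⟨fun V => h ⟨V.1, V.2⟩⟩
    rw [Nat.card_of_isEmpty, Nat.cast_zero]
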